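/- (Composite last-entry construction) For a = m(b−1) with m, b > 2, the complement of the m-tree of b-cliques T(m,b) is a primitive graph with distance sequence 1, ℵ₀, a: in the complement each vertex has infinitely many neighbors (the vertices at T-distance ≥ 2) and exactly m(b−1) vertices at distance 2 (its T(m,b)-neighbors), and the complement has diameter 2. -/

import Mathlib

def VertexTransitive {V : Type*} (G : SimpleGraph V) : Prop :=
  ∀ u v : V, ∃ φ : G ≃g G, φ u = v

def InvariantRel {V : Type*} (G : SimpleGraph V) (r : V → V → Prop) : Prop :=
  ∀ φ : G ≃g G, ∀ u v : V, r u v ↔ r (φ u) (φ v)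

def GraphPrimitive {V : Type*} (G : SimpleGraph V) : Prop :=
  ∀ r : V → V → Prop, Equivalence r → InvariantRel G r →
    (∀ u v : V, r u v ↔ u = v) ∨ (∀ u v : V, r u v)

def DistanceTransitive {V : Type*} (G : SimpleGraph V) : Prop :=
  ∀ a b c d : V, G.dist a b = G.dist c d → ∃ φ : G ≃g G, φ a = c ∧ φ b = d

/-- The `ι`-tree of `b`-cliques, realized as the Cayley graph of the free product of
`ι`-many copies of `ℤ/b` with respect to the nonidentity elements of the factors: two group
elements are joined iff they differ by a nontrivial element of one factor. Every vertex lies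
in `|ι|` many `b`-cliques and every edge lies in a unique `b`-clique. -/
def treeOfCliques (ι : Type*) (b : ℕ) :
    SimpleGraph (Monoid.CoprodI (fun _ : ι => Multiplicative (ZMod b))) where
  Adj u v := u ≠ v ∧ ∃ (i : ι) (x : ZMod b),
    v = u * Monoid.CoprodI.of (M := fun _ : ι => Multiplicative (ZMod b)) (i := i)
      (Multiplicative.ofAdd x)
  symm := by
    constructor
    rintro u v ⟨huv, i, x, rfl⟩
    refine ⟨huv.symm, i, -x, ?_⟩
    rw [mul_assoc, ← map_mul, ← ofAdd_add]
    simp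
  loopless := ⟨fun u h => h.1 rfl⟩


set_option linter.unusedSectionVars false

open Monoid.CoprodI

namespace TreeAux

variable {ι : Type*} [DecidableEq ι] {G : ι → Type*} [∀ i, Group (G i)]
  [∀ i, DecidableEq (G i)]

local notation "Γ" => Monoid.CoprodI G

noncomputable def W (g : Γ) : Word G := Word.equiv g

lemma W_prod (w : Word G) : W (w.prod) = w := Word.equiv.apply_symm_apply w

lemma prod_W (g : Γ) : (W g).prod = g := Word.equiv.symm_apply_apply g

lemma W_smul_empty (g : Γ) : W g = g • Word.empty := rfl

lemma W_one : W (1 : Γ) = Word.empty := by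
  rw [W_smul_empty, one_smul]

lemma W_mul_smul (a g : Γ) : W (a * g) = a • W g := by
  rw [W_smul_empty, mul_smul, ← W_smul_empty]

lemma W_eq_empty_iff {g : Γ} : W g = Word.empty ↔ g = 1 := by
  constructor
  · intro h
    have h2 := congrArg Word.equiv.symm h
    rw [show Word.equiv.symm (W g) = g from Word.equiv.symm_apply_apply g] at h2
    rw [h2]
    show Word.prod Word.empty = 1
    exact Word.prod_empty
  · rintro rfl; exact W_one

lemma toList_eq_nil_iff {w : Word G} : w.toList = [] ↔ w = Word.empty := by
  constructor
  · intro h; exact Word.ext (by simp [h])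
  · intro h; simp [h]

lemma fstIdx_eq_none_iff {g : Γ} : (W g).fstIdx = none ↔ g = 1 := by
  rw [← W_eq_empty_iff, ← toList_eq_nil_iff, Word.fstIdx, Option.map_eq_none_iff, List.head?_eq_none_iff]

/-- first-letter component in factor `i` -/
noncomputable def hI (i : ι) (g : Γ) : G i := (Word.equivPair i (W g)).head

lemma hI_cocycle (i : ι) (y : G i) (g : Γ) : hI i (of y * g) = y * hI i g := by
  unfold hI
  rw [W_mul_smul, Word.equivPair_smul_same]

lemma hI_of_fstIdx_ne {i : ι} {g : Γ} (h : (W g).fstIdx ≠ some i) : hI i g = 1 := by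
  unfold hI
  rw [Word.equivPair_eq_of_fstIdx_ne h]

lemma hI_one (i : ι) : hI i (1:Γ) = 1 := by
  apply hI_of_fstIdx_ne
  rw [fstIdx_eq_none_iff.mpr rfl]
  simp

lemma hI_of_same (i : ι) (y : G i) : hI i (of y) = y := by
  have := hI_cocycle i y 1
  rwa [mul_one, hI_one, mul_one] at this

lemma W_cons {k : ι} (y : G k) (g : Γ) (h : (W g).fstIdx ≠ some k) (hy : y ≠ 1) :
    W (of y * g) = Word.cons y (W g) h hy := by
  rw [Word.cons_eq_smul, W_mul_smul]

lemma toList_of_mul {k : ι} (y : G k) (g : Γ) (h : (W g).fstIdx ≠ some k) (hy : y ≠ 1) :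
    (W (of y * g)).toList = ⟨k, y⟩ :: (W g).toList := by
  rw [W_cons y g h hy, Monoid.CoprodI.Word.cons_toList]

lemma fstIdx_of_mul {k : ι} (y : G k) (g : Γ) (h : (W g).fstIdx ≠ some k) (hy : y ≠ 1) :
    (W (of y * g)).fstIdx = some k := by
  rw [W_cons y g h hy]; simp

lemma fstIdx_of {k : ι} (y : G k) (hy : y ≠ 1) : (W (of (i := k) y)).fstIdx = some k := by
  have := fstIdx_of_mul y 1 (by rw [fstIdx_eq_none_iff.mpr rfl]; simp) hy
  rwa [mul_one] at this

lemma hI_of_ne {i k : ι} (hik : i ≠ k) (y : G k) : hI i (of y) = 1 := by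
  by_cases hy : y = 1
  · rw [hy, map_one, hI_one]
  · exact hI_of_fstIdx_ne (by rw [fstIdx_of y hy]; simpa using Ne.symm hik)

lemma hI_of_fstIdx_some_ne {i k : ι} (hik : i ≠ k) {g : Γ}
    (h : (W g).fstIdx = some k) : hI i g = 1 :=
  hI_of_fstIdx_ne (by rw [h]; simpa using fun e => hik e.symm)

lemma key_R : ∀ (w : Word G) (j : ι) (x : G j), x ≠ 1 →
    (w.prod = 1) ∨ (∃ k, ∃ y : G k, y ≠ 1 ∧ w.prod = of y) ∨
    ((∀ i, hI i (w.prod * of x) = hI i w.prod) ∧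
      (W (w.prod * of x)).fstIdx = (W w.prod).fstIdx ∧ (W w.prod).fstIdx ≠ none) := by
  intro w
  induction w using Word.consRecOn with
  | empty => intro j x hx; left; exact Word.prod_empty
  | cons k y w' hfst hy ih =>
    intro j x hx
    have hWu' : W w'.prod = w' := W_prod w'
    have hfst' : (W w'.prod).fstIdx ≠ some k := by rw [hWu']; exact hfst
    rcases ih j x hx with h1 | ⟨l, z, hz, h2⟩ | ⟨hh, hfi, _⟩
    · -- w'.prod = 1, so prod = of y
      refine Or.inr (Or.inl ⟨k, y, hy, ?_⟩)
      rw [Word.prod_cons, h1, mul_one]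
    · -- w'.prod = of z
      have hlfst : (W w'.prod).fstIdx = some l := by rw [h2]; exact fstIdx_of z hz
      have hlk : l ≠ k := by
        intro h; rw [h] at hlfst; exact hfst' hlfst
      refine Or.inr (Or.inr ?_)
      rw [Word.prod_cons, h2]
      by_cases hjl : j = l
      · subst hjl
        rw [mul_assoc, ← map_mul]
        by_cases hzx : z * x = 1
        · rw [hzx, map_one, mul_one]
          have hfu : (W (of (i := k) y * of z)).fstIdx = some k :=
            fstIdx_of_mul y (of z) (by rw [fstIdx_of z hz]; simp [hlk, Ne.symm hlk]) hy
          have hfy : (W (of (i := k) y)).fstIdx = some k := fstIdx_of y hy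
          refine ⟨fun i => ?_, by rw [hfy, hfu], by rw [hfu]; simp⟩
          by_cases hik : i = k
          · rw [hik, hI_cocycle k y (of z), hI_of_ne (Ne.symm hlk) z, mul_one, hI_of_same]
          · rw [hI_of_fstIdx_some_ne hik hfy, hI_of_fstIdx_some_ne hik hfu]
        · have hfv : (W (of (i := k) y * of (z * x))).fstIdx = some k :=
            fstIdx_of_mul y (of (z*x)) (by rw [fstIdx_of _ hzx]; simp [hlk, Ne.symm hlk]) hy
          have hfu : (W (of (i := k) y * of z)).fstIdx = some k :=
            fstIdx_of_mul y (of z) (by rw [fstIdx_of z hz]; simp [hlk, Ne.symm hlk]) hy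
          refine ⟨fun i => ?_, by rw [hfv, hfu], by rw [hfu]; simp⟩
          by_cases hik : i = k
          · rw [hik, hI_cocycle k y (of (z*x)), hI_cocycle k y (of z),
              hI_of_ne (Ne.symm hlk) (z*x), hI_of_ne (Ne.symm hlk) z]
          · rw [hI_of_fstIdx_some_ne hik hfv, hI_of_fstIdx_some_ne hik hfu]
      · -- j ≠ l
        rw [mul_assoc]
        have hfzx : (W (of z * of x)).fstIdx = some l :=
          fstIdx_of_mul z (of x) (by rw [fstIdx_of x hx]; simp [hjl, fun e => hjl (Eq.symm e)]) hz
        have hfv : (W (of (i := k) y * (of z * of x))).fstIdx = some k :=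
          fstIdx_of_mul y _ (by rw [hfzx]; simp [hlk, Ne.symm hlk]) hy
        have hfu : (W (of (i := k) y * of z)).fstIdx = some k :=
          fstIdx_of_mul y (of z) (by rw [fstIdx_of z hz]; simp [hlk, Ne.symm hlk]) hy
        refine ⟨fun i => ?_, by rw [hfv, hfu], by rw [hfu]; simp⟩
        by_cases hik : i = k
        · rw [hik, hI_cocycle k y (of z * of x), hI_cocycle k y (of z),
            hI_of_fstIdx_some_ne (Ne.symm hlk) hfzx, hI_of_ne (Ne.symm hlk) z]
        · rw [hI_of_fstIdx_some_ne hik hfv, hI_of_fstIdx_some_ne hik hfu]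
    · -- inductive main case
      refine Or.inr (Or.inr ?_)
      rw [Word.prod_cons, mul_assoc]
      have hfv' : (W (w'.prod * of x)).fstIdx ≠ some k := by rw [hfi]; exact hfst'
      have hfv : (W (of (i := k) y * (w'.prod * of x))).fstIdx = some k :=
        fstIdx_of_mul y _ hfv' hy
      have hfu : (W (of (i := k) y * w'.prod)).fstIdx = some k := fstIdx_of_mul y _ hfst' hy
      refine ⟨fun i => ?_, by rw [hfv, hfu], by rw [hfu]; simp⟩
      by_cases hik : i = k
      · rw [hik, hI_cocycle k y _, hI_cocycle k y _, hh k]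
      · rw [hI_of_fstIdx_some_ne hik hfv, hI_of_fstIdx_some_ne hik hfu]

lemma clique_or_cocycle (i : ι) (u : Γ) {j : ι} (x : G j) (hx : x ≠ 1) :
    (∃ s t : G i, u = of s ∧ u * of x = of t) ∨ hI i (u * of x) = hI i u := by
  obtain ⟨w, rfl⟩ : ∃ w : Word G, w.prod = u := ⟨W u, prod_W u⟩
  rcases key_R w j x hx with h1 | ⟨k, y, hy, h2⟩ | ⟨hh, _, _⟩
  · rw [h1]
    by_cases hji : j = i
    · refine Or.inl ⟨1, hji ▸ x, by simp, ?_⟩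
      subst hji; simp
    · right
      rw [one_mul, hI_one, hI_of_ne (Ne.symm hji) x]
  · rw [h2]
    by_cases hki : k = i
    · by_cases hji : j = i
      · subst hki; subst hji; exact Or.inl ⟨y, y * x, rfl, by rw [map_mul]⟩
      · right
        have hji2 : j ≠ k := fun e => hji (e.trans hki)
        rw [← hki, hI_cocycle k y (of x), hI_of_ne (Ne.symm hji2) x, mul_one, hI_of_same]
    · right
      by_cases hjk : j = k
      · subst hjk
        rw [← map_mul, hI_of_ne (Ne.symm hki) (y * x), hI_of_ne (Ne.symm hki) y]
      · have hfv : (W (of (i := k) y * of x)).fstIdx = some k :=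
          fstIdx_of_mul y (of x) (by rw [fstIdx_of x hx]; simp [hjk, fun e => hjk (Eq.symm e)]) hy
        rw [hI_of_fstIdx_some_ne (Ne.symm hki) hfv,
          hI_of_ne (Ne.symm hki) y]
  · exact Or.inr (hh i)
end TreeAux


open TreeAux

section Concrete

variable {m b : ℕ}

local notation "Γ" => Monoid.CoprodI (fun _ : Fin m => Multiplicative (ZMod b))
local notation "Gr" => treeOfCliques (Fin m) b
local notation "Zb" => Multiplicative (ZMod b)

lemma adj_iff {u v : Γ} : (Gr).Adj u v ↔ u ≠ v ∧ ∃ (i : Fin m) (g : Multiplicative (ZMod b)),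
    v = u * of (i := i) g := by
  show (u ≠ v ∧ ∃ (i : Fin m) (x : ZMod b), v = u * of (i := i) (Multiplicative.ofAdd x)) ↔ _
  constructor
  · rintro ⟨h, i, x, rfl⟩; exact ⟨h, i, Multiplicative.ofAdd x, rfl⟩
  · rintro ⟨h, i, g, rfl⟩; exact ⟨h, i, Multiplicative.toAdd g, by simp⟩

lemma adj_mul_of {u : Γ} {j : Fin m} {g : Multiplicative (ZMod b)} (hg : g ≠ 1) :
    (Gr).Adj u (u * of (i := j) g) := by
  refine adj_iff.mpr ⟨?_, j, g, rfl⟩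
  intro h
  have h1 : of (M := fun _ : Fin m => Multiplicative (ZMod b)) (i := j) g = 1 :=
    mul_left_cancel (a := u) (by rw [mul_one, ← h])
  exact hg (Monoid.CoprodI.of_injective j (h1.trans (map_one _).symm))

/-! ### The first-letter relabeling automorphism -/

noncomputable def psiFun (i : Fin m) (σ : Zb ≃ Zb) (g : Γ) : Γ :=
  of (i := i) (σ (hI i g) * (hI i g)⁻¹) * g

lemma hI_psiFun (i : Fin m) (σ : Zb ≃ Zb) (g : Γ) : hI i (psiFun i σ g) = σ (hI i g) := by
  rw [psiFun, hI_cocycle]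
  group

lemma psiFun_psiFun (i : Fin m) (σ τ : Zb ≃ Zb) (g : Γ) :
    psiFun i σ (psiFun i τ g) = psiFun i (τ.trans σ) g := by
  rw [psiFun, hI_psiFun, psiFun, psiFun, ← mul_assoc, ← map_mul, mul_assoc,
    inv_mul_cancel_left]
  rfl

lemma psiFun_refl (i : Fin m) (g : Γ) : psiFun i (Equiv.refl _) g = g := by
  simp [psiFun]

noncomputable def psiEquiv (i : Fin m) (σ : Zb ≃ Zb) : Γ ≃ Γ where
  toFun := psiFun i σ
  invFun := psiFun i σ.symm
  left_inv g := by rw [psiFun_psiFun, Equiv.self_trans_symm, psiFun_refl]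
  right_inv g := by rw [psiFun_psiFun, Equiv.symm_trans_self, psiFun_refl]

lemma psiFun_of_same (i : Fin m) (σ : Zb ≃ Zb) (s : Zb) :
    psiFun i σ (of (i := i) s) = of (i := i) (σ s) := by
  rw [psiFun, hI_of_same, ← map_mul, inv_mul_cancel_right]

lemma psiFun_adj (i : Fin m) (σ : Zb ≃ Zb) {u v : Γ} (h : (Gr).Adj u v) :
    (Gr).Adj (psiFun i σ u) (psiFun i σ v) := by
  obtain ⟨hne, j, g, rfl⟩ := adj_iff.mp h
  have hg : g ≠ 1 := by
    rintro rfl; exact hne (by simp)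
  rcases clique_or_cocycle i u g hg with ⟨s, t, hu, hv⟩ | hc
  · have hst : s ≠ t := by
      rintro rfl; exact hne (hu.trans hv.symm)
    rw [hv, hu, psiFun_of_same, psiFun_of_same]
    refine adj_iff.mpr ⟨?_, i, (σ s)⁻¹ * σ t, by rw [← map_mul, mul_inv_cancel_left]⟩
    intro hconeq
    exact hst (σ.injective (Monoid.CoprodI.of_injective i hconeq))
  · rw [psiFun, psiFun, hc, ← mul_assoc]
    exact adj_mul_of hg

noncomputable def psiIso (i : Fin m) (σ : Zb ≃ Zb) : (Gr) ≃g (Gr) where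
  toEquiv := psiEquiv i σ
  map_rel_iff' := by
    intro u v
    constructor
    · intro h
      have h2 := psiFun_adj i σ.symm h
      rwa [show psiFun i σ.symm (psiEquiv i σ u) = u from (psiEquiv i σ).left_inv u,
        show psiFun i σ.symm (psiEquiv i σ v) = v from (psiEquiv i σ).left_inv v] at h2
    · exact psiFun_adj i σ

/-! ### Factor permutations -/

def permHom (σ : Fin m ≃ Fin m) : Γ →* Γ :=
  Monoid.CoprodI.lift (fun i => Monoid.CoprodI.of (M := fun _ : Fin m => Multiplicative (ZMod b)) (i := σ i))

lemma permHom_of (σ : Fin m ≃ Fin m) {i : Fin m} (x : Multiplicative (ZMod b)) :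
    permHom σ (of (i := i) x) = of (i := σ i) x := by
  simp [permHom, Monoid.CoprodI.lift_of]

lemma permHom_permHom (σ τ : Fin m ≃ Fin m) (g : Γ) :
    permHom σ (permHom τ g) = permHom (τ.trans σ) g := by
  have : (permHom (m := m) (b := b) σ).comp (permHom τ) = permHom (τ.trans σ) := by
    apply Monoid.CoprodI.ext_hom
    intro i
    ext x
    simp [permHom_of]
  exact DFunLike.congr_fun this g

lemma permHom_refl (g : Γ) : permHom (Equiv.refl _) g = g := by
  have : permHom (m := m) (b := b) (Equiv.refl _) = MonoidHom.id _ := by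
    apply Monoid.CoprodI.ext_hom
    intro i
    ext x
    simp [permHom_of]
  rw [this]; rfl

def permGrEquiv (σ : Fin m ≃ Fin m) : Γ ≃ Γ where
  toFun := permHom σ
  invFun := permHom σ.symm
  left_inv g := by rw [permHom_permHom, Equiv.self_trans_symm, permHom_refl]
  right_inv g := by rw [permHom_permHom, Equiv.symm_trans_self, permHom_refl]

lemma permHom_adj (σ : Fin m ≃ Fin m) {u v : Γ} (h : (Gr).Adj u v) :
    (Gr).Adj (permHom σ u) (permHom σ v) := by
  obtain ⟨hne, j, g, rfl⟩ := adj_iff.mp h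
  have hg : g ≠ 1 := by rintro rfl; exact hne (by simp)
  rw [map_mul, permHom_of]
  exact adj_mul_of hg

def permIso (σ : Fin m ≃ Fin m) : (Gr) ≃g (Gr) where
  toEquiv := permGrEquiv σ
  map_rel_iff' := by
    intro u v
    constructor
    · intro h
      have h2 := permHom_adj σ.symm h
      rwa [show permHom σ.symm (permGrEquiv σ u) = u from (permGrEquiv σ).left_inv u,
        show permHom σ.symm (permGrEquiv σ v) = v from (permGrEquiv σ).left_inv v] at h2
    · exact permHom_adj σ

/-! ### Translations -/

def translIso (a : Γ) : (Gr) ≃g (Gr) where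
  toEquiv := Equiv.mulLeft a
  map_rel_iff' := by
    intro u v
    simp only [Equiv.coe_mulLeft, adj_iff]
    constructor
    · rintro ⟨hne, i, g, hv⟩
      exact ⟨fun h => hne (by rw [h]), i, g, by rw [mul_assoc] at hv; exact mul_left_cancel hv⟩
    · rintro ⟨hne, i, g, rfl⟩
      exact ⟨fun h => hne (mul_left_cancel h), i, g, (mul_assoc _ _ _).symm⟩

/-! ### Complement isos -/

def complIso {V : Type*} {H : SimpleGraph V} (φ : H ≃g H) : Hᶜ ≃g Hᶜ where
  toEquiv := φ.toEquiv
  map_rel_iff' := by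
    intro u v
    have hco : ∀ w, φ.toEquiv w = φ w := fun _ => rfl
    simp only [SimpleGraph.compl_adj, hco, φ.map_adj_iff, ne_eq, EmbeddingLike.apply_eq_iff_eq]

end Concrete
lemma complIso_apply {V : Type*} {H : SimpleGraph V} (φ : H ≃g H) (u : V) :
    complIso φ u = φ u := rfl

lemma psiIso_apply {m b : ℕ} (i : Fin m) (σ) (u) : psiIso (b := b) i σ u = psiFun i σ u := rfl

lemma permIso_apply {m b : ℕ} (σ : Fin m ≃ Fin m) (u) : permIso (b := b) σ u = permHom σ u := rfl

lemma translIso_apply {m b : ℕ} (a u : Monoid.CoprodI (fun _ : Fin m => Multiplicative (ZMod b))) :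
    translIso a u = a * u := rfl

section Prim

variable {m b : ℕ}

local notation "Γ" => Monoid.CoprodI (fun _ : Fin m => Multiplicative (ZMod b))
local notation "Gr" => treeOfCliques (Fin m) b
local notation "Zb" => Multiplicative (ZMod b)

lemma psiFun_one (i : Fin m) (σ : Zb ≃ Zb) (hσ : σ 1 = 1) : psiFun i σ (1 : Γ) = 1 := by
  rw [psiFun, hI_one, hσ]
  simp

lemma hI_ne_one_of_fstIdx {k : Fin m} {g : Γ} (h : (W g).fstIdx = some k) : hI k g ≠ 1 := by
  intro h1
  have h2 := Monoid.CoprodI.Word.equivPair_head_smul_equivPair_tail (i := k) (W g)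
  rw [show (Monoid.CoprodI.Word.equivPair k (W g)).head = hI k g from rfl, h1, map_one,
    one_smul] at h2
  have h3 := (Monoid.CoprodI.Word.equivPair k (W g)).fstIdx_ne
  rw [h2] at h3
  exact h3 h

lemma exists_third (hb : 2 < b) (s t : Zb) : ∃ z : Zb, z ≠ s ∧ z ≠ t := by
  haveI : NeZero b := ⟨by omega⟩
  by_contra hcon
  push_neg at hcon
  have hsub : (Finset.univ : Finset Zb) ⊆ {s, t} := by
    intro z _
    by_cases hz : z = s
    · simp [hz]
    · simp [hcon z hz]
  have hcard := Finset.card_le_card hsub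
  have h2 : (Finset.univ : Finset Zb).card = b := by
    rw [Finset.card_univ]
    simp [ZMod.card]
  have h3 : ({s, t} : Finset Zb).card ≤ 2 := Finset.card_insert_le _ _ |>.trans (by simp)
  omega

theorem primitive_compl (hm : 2 < m) (hb : 2 < b) : GraphPrimitive (Gr)ᶜ := by
  intro r hr hinv
  by_cases htriv : ∀ u v : Γ, r u v ↔ u = v
  · exact Or.inl htriv
  right
  -- r is invariant under left translation
  have htr : ∀ a u v : Γ, r u v ↔ r (a * u) (a * v) := by
    intro a u v
    simpa [complIso_apply, translIso_apply] using hinv (complIso (translIso a)) u v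
  set S : Γ → Prop := fun x => r 1 x with hS
  have hS1 : S 1 := hr.refl 1
  have hSmul : ∀ x y, S x → S y → S (x * y) := by
    intro x y hx hy
    have h := (htr x 1 y).mp hy
    rw [mul_one] at h
    exact hr.trans hx h
  have hSinv : ∀ x, S x → S x⁻¹ := by
    intro x hx
    have := (htr x⁻¹ 1 x).mp hx
    rw [inv_mul_cancel] at this
    exact hr.symm (by simpa using this)
  have hSauto : ∀ (φ : (Gr) ≃g (Gr)), φ 1 = 1 → ∀ x, S x → S (φ x) := by
    intro φ hφ x hx
    have := (hinv (complIso φ) 1 x).mp hx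
    rwa [complIso_apply, complIso_apply, hφ] at this
  -- get a nontrivial element of S
  obtain ⟨g0, hg0ne, hg0⟩ : ∃ g : Γ, g ≠ 1 ∧ S g := by
    push_neg at htriv
    obtain ⟨u0, v0, hne0⟩ := htriv
    have hru : r u0 v0 ∧ u0 ≠ v0 := by
      rcases hne0 with ⟨h1, h2⟩ | ⟨h1, h2⟩
      · exact ⟨h1, h2⟩
      · exact absurd (h2 ▸ hr.refl u0) h1
    refine ⟨u0⁻¹ * v0, fun h => hru.2 (inv_mul_eq_one.mp h), ?_⟩
    have := (htr u0⁻¹ u0 v0).mp hru.1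
    rwa [inv_mul_cancel] at this
  -- Step 1: a nontrivial one-letter element of S
  have hone : ∃ (k : Fin m) (c : Zb), c ≠ 1 ∧ S (of (i := k) c) := by
    obtain ⟨k, hk⟩ : ∃ k, (W g0).fstIdx = some k := by
      rcases ho : (W g0).fstIdx with _ | k
      · exact absurd (fstIdx_eq_none_iff.mp ho) hg0ne
      · exact ⟨k, rfl⟩
    set y := hI k g0 with hy
    have hyne : y ≠ 1 := hI_ne_one_of_fstIdx hk
    obtain ⟨z, hzy, hz1⟩ := exists_third hb y 1
    have hσ1 : Equiv.swap y z 1 = 1 :=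
      Equiv.swap_apply_of_ne_of_ne (Ne.symm hyne) (Ne.symm hz1)
    have hψ := hSauto (psiIso k (Equiv.swap y z))
      (by rw [psiIso_apply]; exact psiFun_one _ _ hσ1) g0 hg0
    rw [psiIso_apply] at hψ
    refine ⟨k, z * y⁻¹, ?_, ?_⟩
    · exact fun h => hzy (mul_inv_eq_one.mp h)
    · have : psiFun k (Equiv.swap y z) g0 * g0⁻¹ = of (i := k) (z * y⁻¹) := by
        rw [psiFun, mul_inv_cancel_right, ← hy, Equiv.swap_apply_left]
      rw [← this]
      exact hSmul _ _ hψ (hSinv _ hg0)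
  obtain ⟨k, c, hc1, hSc⟩ := hone
  -- Step 2: all one-letter elements are in S
  have hall : ∀ (j : Fin m) (w : Zb), S (of (i := j) w) := by
    intro j w
    by_cases hw : w = 1
    · rw [hw, map_one]; exact hS1
    have hperm := hSauto (permIso (Equiv.swap k j))
      (by rw [permIso_apply, map_one]) _ hSc
    rw [permIso_apply, permHom_of, Equiv.swap_apply_left] at hperm
    have hτ1 : Equiv.swap c w 1 = 1 :=
      Equiv.swap_apply_of_ne_of_ne (Ne.symm hc1) (Ne.symm hw)
    have hψ := hSauto (psiIso j (Equiv.swap c w))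
      (by rw [psiIso_apply]; exact psiFun_one _ _ hτ1) _ hperm
    rwa [psiIso_apply, psiFun_of_same, Equiv.swap_apply_left] at hψ
  -- Step 3: S is everything
  have hSall : ∀ g : Γ, S g := by
    intro g
    induction g using Monoid.CoprodI.induction_left with
    | one => exact hS1
    | mul w x hx => exact hSmul _ _ (hall _ w) hx
  intro u v
  have := (htr u⁻¹ u v).mp
  have h2 := hSall (u⁻¹ * v)
  have h3 := (htr u 1 (u⁻¹ * v)).mp h2
  rwa [mul_one, mul_inv_cancel_left] at h3

end Prim
section Final

variable {m b : ℕ}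

local notation "Γ" => Monoid.CoprodI (fun _ : Fin m => Multiplicative (ZMod b))
local notation "Gr" => treeOfCliques (Fin m) b
local notation "Zb" => Multiplicative (ZMod b)

lemma countable_G : Countable Γ := by
  haveI : Countable (ZMod b) := by
    cases b with
    | zero => exact (inferInstance : Countable ℤ)
    | succ n => exact (inferInstance : Countable (Fin (n + 1)))
  haveI : Countable Zb := ‹Countable (ZMod b)›
  have hinj : Function.Injective (fun g : Γ => (W g).toList) := by
    intro x y h
    have h2 : W x = W y := Monoid.CoprodI.Word.ext h
    exact Monoid.CoprodI.Word.equiv.injective h2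
  exact hinj.countable

lemma ofAdd_ne_one (hb : 2 < b) : (Multiplicative.ofAdd (1 : ZMod b)) ≠ (1 : Zb) := by
  haveI : NeZero b := ⟨by omega⟩
  haveI : Fact (1 < b) := ⟨by omega⟩
  intro h
  exact (one_ne_zero : (1 : ZMod b) ≠ 0) (by simpa using h)

lemma infinite_G (hm : 2 < m) (hb : 2 < b) : Infinite Γ := by
  set i0 : Fin m := ⟨0, by omega⟩ with hi0
  set i1 : Fin m := ⟨1, by omega⟩ with hi1
  have hi : i0 ≠ i1 := by simp [hi0, hi1, Fin.ext_iff]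
  set a : Zb := Multiplicative.ofAdd (1 : ZMod b) with ha'
  have ha : a ≠ 1 := ofAdd_ne_one hb
  set g : Γ := of (i := i0) a * of (i := i1) a with hg
  have key : ∀ n : ℕ, ((W (g ^ n)).toList.length = 2 * n) ∧ (W (g ^ n)).fstIdx ≠ some i1 := by
    intro n
    induction n with
    | zero =>
      rw [pow_zero, W_one]
      exact ⟨rfl, by simp [Monoid.CoprodI.Word.empty, Monoid.CoprodI.Word.fstIdx]⟩
    | succ n ih =>
      have h1 : (W (of (i := i1) a * g ^ n)).toList = ⟨i1, a⟩ :: (W (g ^ n)).toList :=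
        toList_of_mul (G := fun _ : Fin m => Zb) a _ ih.2 ha
      have hf1 : (W (of (i := i1) a * g ^ n)).fstIdx ≠ some i0 := by
        rw [fstIdx_of_mul (G := fun _ : Fin m => Zb) a _ ih.2 ha]
        simp [Ne.symm hi]
      have h2 : (W (of (i := i0) a * (of (i := i1) a * g ^ n))).toList =
          ⟨i0, a⟩ :: (W (of (i := i1) a * g ^ n)).toList := toList_of_mul (G := fun _ : Fin m => Zb) a _ hf1 ha
      have hsplit : g ^ (n + 1) = of (i := i0) a * (of (i := i1) a * g ^ n) := by
        rw [pow_succ', hg, mul_assoc]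
      constructor
      · rw [hsplit, h2, List.length_cons, h1, List.length_cons, ih.1]
        omega
      · rw [hsplit, fstIdx_of_mul (G := fun _ : Fin m => Zb) a _ hf1 ha]
        simp [hi]
  refine Infinite.of_injective (fun n : ℕ => g ^ n) (fun p q h => ?_)
  have := congrArg (fun x : Γ => (W x).toList.length) h
  simp only [(key p).1, (key q).1] at this
  omega

lemma of_eq_of {j k : Fin m} {x y : Zb} (hx : x ≠ 1)
    (h : of (M := fun _ : Fin m => Multiplicative (ZMod b)) (i := j) x = of (i := k) y) :
    j = k ∧ x = y := by
  by_cases hjk : j = k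
  · subst hjk
    exact ⟨rfl, Monoid.CoprodI.of_injective j h⟩
  · exfalso
    set π : Γ →* Zb :=
      Monoid.CoprodI.lift (fun l => if l = j then MonoidHom.id Zb else 1) with hπ
    have h1 : π (of (i := j) x) = x := by
      rw [hπ, Monoid.CoprodI.lift_of]; simp
    have h2 : π (of (i := k) y) = 1 := by
      rw [hπ, Monoid.CoprodI.lift_of, if_neg (fun e : k = j => hjk e.symm), MonoidHom.one_apply]
    exact hx (by rw [← h1, h, h2])

noncomputable def nbrEquiv (v : Γ) :
    (Fin m × {x : ZMod b // x ≠ 0}) ≃ {w : Γ // (Gr).Adj v w} := by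
  apply Equiv.ofBijective
    (f := fun p => ⟨v * of (i := p.1) (Multiplicative.ofAdd p.2.1),
      adj_mul_of (fun h => p.2.2 (by simpa using congrArg Multiplicative.toAdd h))⟩)
  constructor
  · rintro ⟨j, x, hx⟩ ⟨k, y, hy⟩ heq
    have h1 := mul_left_cancel (Subtype.ext_iff.mp heq)
    obtain ⟨h2, h3⟩ := of_eq_of (by simpa using hx) h1
    simp only [Prod.mk.injEq, Subtype.mk.injEq]
    exact ⟨h2, by simpa using h3⟩
  · rintro ⟨w, hw⟩
    obtain ⟨hne, j, g, rfl⟩ := adj_iff.mp hw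
    have hg : g ≠ 1 := by rintro rfl; exact hne (by simp)
    refine ⟨⟨j, Multiplicative.toAdd g, ?_⟩, ?_⟩
    · intro h; exact hg (by simpa using congrArg Multiplicative.ofAdd h)
    · simp

lemma finite_nbr (hb : 2 < b) (v : Γ) : Finite {w : Γ // (Gr).Adj v w} := by
  haveI : NeZero b := ⟨by omega⟩
  exact Finite.of_equiv _ (nbrEquiv v)

lemma ncard_nbr (hb : 2 < b) (v : Γ) :
    Nat.card {w : Γ // (Gr).Adj v w} = m * (b - 1) := by
  haveI : NeZero b := ⟨by omega⟩
  rw [← Nat.card_congr (nbrEquiv v), Nat.card_prod, Nat.card_eq_fintype_card,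
    Nat.card_eq_fintype_card, Fintype.card_fin,
    Fintype.card_subtype_compl (p := fun x : ZMod b => x = 0)]
  rw [Fintype.card_subtype_eq, ZMod.card]

lemma nbrSet_finite (hb : 2 < b) (v : Γ) : ((Gr).neighborSet v).Finite := by
  rw [← Set.finite_coe_iff]
  exact finite_nbr hb v

lemma exists_cnn (hm : 2 < m) (hb : 2 < b) (u v : Γ) :
    ∃ w, w ≠ u ∧ w ≠ v ∧ ¬(Gr).Adj u w ∧ ¬(Gr).Adj v w := by
  haveI := infinite_G hm hb
  have hfin : ((Gr).neighborSet u ∪ (Gr).neighborSet v ∪ {u, v} : Set Γ).Finite :=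
    (((nbrSet_finite hb u).union (nbrSet_finite hb v)).union ((Set.finite_singleton v).insert u))
  obtain ⟨w, hw⟩ := hfin.exists_notMem
  simp only [Set.mem_union, Set.mem_insert_iff, Set.mem_singleton_iff, not_or,
    SimpleGraph.mem_neighborSet] at hw
  exact ⟨w, hw.2.1, hw.2.2, hw.1.1, hw.1.2⟩

end Final
section Main

variable {m b : ℕ}

local notation "Γ" => Monoid.CoprodI (fun _ : Fin m => Multiplicative (ZMod b))
local notation "Gr" => treeOfCliques (Fin m) b

lemma dist_le_two (hm : 2 < m) (hb : 2 < b) {u v : Γ} (huv : u ≠ v) :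
    (Gr)ᶜ.dist u v ≤ 2 := by
  by_cases h : (Gr).Adj u v
  · obtain ⟨w, hwu, hwv, hnu, hnv⟩ := exists_cnn hm hb u v
    have a1 : (Gr)ᶜ.Adj u w := by rw [SimpleGraph.compl_adj]; exact ⟨Ne.symm hwu, hnu⟩
    have a2 : (Gr)ᶜ.Adj w v := by
      rw [SimpleGraph.compl_adj]
      exact ⟨hwv, fun hh => hnv hh.symm⟩
    have := SimpleGraph.dist_le
      (SimpleGraph.Walk.cons a1 (SimpleGraph.Walk.cons a2 SimpleGraph.Walk.nil))
    simpa using this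
  · have hca : (Gr)ᶜ.Adj u v := by rw [SimpleGraph.compl_adj]; exact ⟨huv, h⟩
    rw [SimpleGraph.dist_eq_one_iff_adj.mpr hca]
    omega

lemma dist_eq_two_iff (hm : 2 < m) (hb : 2 < b) {v w : Γ} :
    (Gr)ᶜ.dist v w = 2 ↔ (Gr).Adj v w := by
  constructor
  · intro h
    have hvw : v ≠ w := by
      rintro rfl
      rw [SimpleGraph.dist_self] at h
      omega
    have hnadj : ¬(Gr)ᶜ.Adj v w := fun ha => by
      rw [SimpleGraph.dist_eq_one_iff_adj.mpr ha] at h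
      omega
    by_contra h2
    exact hnadj ((SimpleGraph.compl_adj _ _ _).mpr ⟨hvw, h2⟩)
  · intro ha
    have hvw : v ≠ w := ha.ne
    have h1 : (Gr)ᶜ.dist v w ≠ 1 := fun h => by
      have h2 := SimpleGraph.dist_eq_one_iff_adj.mp h
      rw [SimpleGraph.compl_adj] at h2
      exact h2.2 ha
    have h0 : (Gr)ᶜ.dist v w ≠ 0 := by
      rw [SimpleGraph.dist_ne_zero_iff_ne_and_reachable]
      obtain ⟨x, hxu, hxv, hnu, hnv⟩ := exists_cnn hm hb v w
      refine ⟨hvw, ⟨SimpleGraph.Walk.cons (v := x)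
        (by rw [SimpleGraph.compl_adj]; exact ⟨Ne.symm hxu, hnu⟩)
        (SimpleGraph.Walk.cons
          (by rw [SimpleGraph.compl_adj]; exact ⟨hxv, fun hh => hnv hh.symm⟩)
          SimpleGraph.Walk.nil)⟩⟩
    have h2 := dist_le_two hm hb hvw
    omega

end Main

/-- The complement of the `m`-tree of `b`-cliques `T(m,b)` (for `m, b > 2`) is a primitive
graph with distance sequence `1, ℵ₀, m(b-1)`: every vertex has `ℵ₀` many vertices at
distance `1`, the vertices at distance `2` from `v` are exactly the `T(m,b)`-neighbors of
`v`, of which there are `m(b-1)`, and the complement has diameter `2`. -/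
theorem compl_treeOfCliques_properties (m b : ℕ) (hm : 2 < m) (hb : 2 < b) :
    GraphPrimitive (treeOfCliques (Fin m) b)ᶜ ∧
    (∀ v, Cardinal.mk {w // (treeOfCliques (Fin m) b)ᶜ.dist v w = 1} = Cardinal.aleph0) ∧
    (∀ v, {w | (treeOfCliques (Fin m) b)ᶜ.dist v w = 2} =
      (treeOfCliques (Fin m) b).neighborSet v) ∧
    (∀ v, Nat.card {w // (treeOfCliques (Fin m) b)ᶜ.dist v w = 2} = m * (b - 1)) ∧
    (∀ u v, u ≠ v → (treeOfCliques (Fin m) b)ᶜ.dist u v ≤ 2) ∧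
    (∃ u v, (treeOfCliques (Fin m) b)ᶜ.dist u v = 2) := by
  haveI := countable_G (m := m) (b := b)
  haveI := infinite_G hm hb
  refine ⟨primitive_compl hm hb, ?_, ?_, ?_, fun u v h => dist_le_two hm hb h, ?_⟩
  · intro v
    have hfin : {w | ¬ (treeOfCliques (Fin m) b)ᶜ.Adj v w}.Finite := by
      apply Set.Finite.subset ((nbrSet_finite hb v).insert v)
      intro w hw
      simp only [Set.mem_setOf_eq, SimpleGraph.compl_adj, not_and, not_not] at hw
      rw [Set.mem_insert_iff]
      by_cases hvw : v = w
      · exact Or.inl hvw.symm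
      · exact Or.inr (hw hvw)
    have hfin2 : ({w | (treeOfCliques (Fin m) b)ᶜ.Adj v w}ᶜ).Finite := by
      rwa [Set.compl_setOf]
    have hinf := hfin2.infinite_compl
    rw [compl_compl] at hinf
    haveI := hinf.to_subtype
    have e : {w // (treeOfCliques (Fin m) b)ᶜ.dist v w = 1} ≃
        {w | (treeOfCliques (Fin m) b)ᶜ.Adj v w} :=
      Equiv.subtypeEquivRight (fun w => by
        rw [SimpleGraph.dist_eq_one_iff_adj]; rfl)
    haveI := Equiv.infinite_iff e |>.mpr inferInstance
    exact Cardinal.mk_eq_aleph0 _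
  · intro v
    ext w
    simp only [Set.mem_setOf_eq, SimpleGraph.mem_neighborSet]
    exact dist_eq_two_iff hm hb
  · intro v
    have e : {w // (treeOfCliques (Fin m) b)ᶜ.dist v w = 2} ≃
        {w // (treeOfCliques (Fin m) b).Adj v w} :=
      Equiv.subtypeEquivRight (fun w => dist_eq_two_iff hm hb)
    rw [Nat.card_congr e]
    exact ncard_nbr hb v
  · refine ⟨1, Monoid.CoprodI.of (M := fun _ : Fin m => Multiplicative (ZMod b))
      (i := ⟨0, by omega⟩) (Multiplicative.ofAdd (1 : ZMod b)), ?_⟩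
    rw [dist_eq_two_iff hm hb]
    have h := adj_mul_of (u := (1 : Monoid.CoprodI (fun _ : Fin m => Multiplicative (ZMod b))))
      (j := ⟨0, by omega⟩) (ofAdd_ne_one hb)
    rwa [one_mul] at h
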